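/- arXiv:2512.01944 — 2 statements merged into one kernel-verified Lean document; each statement's English description precedes it below -/
import Mathlib

section
/- Let V be an n × (k) real matrix (with k ≤ n) and let A ∈ GL(n,ℝ) have singular values σ₁ ≥ … ≥ σ_n. Then (∏_{i=n−k+1}^{n} σ_i)² · det(VᵀV) ≤ det((AV)ᵀ(AV)) ≤ (∏_{i=1}^{k} σ_i)² · det(VᵀV). -/
/-!
Diagonalize `AᵀA = U diag(σ²) Uᵀ` with `U` orthogonal and put `W = UᵀV`; then the two Gram
matrices are `Wᵀ diag(σ²) W` and `WᵀW`. By the Cauchy–Binet formula both determinants are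
sums over the `k`-row minors of `W`, weighted by `∏ σ_i²` over the chosen rows, resp. by `1`.
For `k` distinct rows that weight lies between the squared products of the `k` smallest and of
the `k` largest singular values, which gives both bounds term by term.
-/

open Matrix Polynomial Finset

theorem Function.exists_perm_eq_comp_of_map_univ_eq {ι β : Type*} [Fintype ι] [DecidableEq β]
    {f g : ι → β} (h : univ.val.map f = univ.val.map g) : ∃ e : Equiv.Perm ι, f = g ∘ e := by
  have hcard (b : β) : Fintype.card {i // f i = b} = Fintype.card {i // g i = b} := by
    simpa [Multiset.count_map, Fintype.card_subtype, eq_comm, ← Finset.filter_val] using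
      congrArg (Multiset.count b) h
  exact ⟨Equiv.ofFiberEquiv fun b => Fintype.equivOfCardEq (hcard b),
    funext fun i => (Equiv.ofFiberEquiv_map _ i).symm⟩

theorem Finset.prod_le_prod_of_card_eq {ι R : Type*} [DecidableEq ι] [CommSemiring R]
    [LinearOrder R] [IsOrderedRing R] {f : ι → R} (hf : ∀ i, 0 ≤ f i) {s t : Finset ι}
    (hst : #s = #t) (h : ∀ i ∈ s \ t, ∀ j ∈ t \ s, f i ≤ f j) :
    ∏ i ∈ s, f i ≤ ∏ i ∈ t, f i := by
  rw [← prod_inter_mul_prod_sdiff s t, ← prod_inter_mul_prod_sdiff t s, inter_comm]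
  refine mul_le_mul_of_nonneg_left ?_ (prod_nonneg fun i _ => hf i)
  rcases (t \ s).eq_empty_or_nonempty with hts | hts
  · rw [hts, card_eq_zero.mp ((card_sdiff_comm hst).trans (by rw [hts, card_empty]))]
  · obtain ⟨j₀, hj₀, hmin⟩ := (t \ s).exists_min_image f hts
    calc ∏ i ∈ s \ t, f i
        ≤ ∏ _i ∈ s \ t, f j₀ := prod_le_prod (fun i _ => hf i) fun i hi => h i hi j₀ hj₀
      _ = ∏ _j ∈ t \ s, f j₀ := by rw [prod_const, prod_const, card_sdiff_comm hst]
      _ ≤ ∏ j ∈ t \ s, f j := prod_le_prod (fun _ _ => hf j₀) hmin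

section AntitoneProd

variable {n k : ℕ} {σ : Fin n → ℝ} {r : Fin k → Fin n}

theorem Antitone.prod_comp_le_prod_filter_lt (hσ : Antitone σ) (hσ₀ : ∀ i, 0 ≤ σ i)
    (hr : Function.Injective r) :
    ∏ j, σ (r j) ≤ ∏ i ∈ univ.filter (fun i : Fin n => (i : ℕ) < k), σ i := by
  have hkn : k ≤ n := by simpa using Fintype.card_le_of_injective r hr
  rw [← prod_image fun a _ b _ hab => hr hab]
  refine prod_le_prod_of_card_eq hσ₀ ?_ fun i hi j hj => hσ ?_
  · rw [card_image_of_injective _ hr, Fin.card_filter_val_lt, card_univ, Fintype.card_fin,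
      min_eq_right hkn]
  · simp only [mem_sdiff, mem_filter, mem_univ, true_and] at hi hj
    exact Fin.le_def.mpr (by omega)

theorem Antitone.prod_filter_le_prod_comp (hσ : Antitone σ) (hσ₀ : ∀ i, 0 ≤ σ i)
    (hr : Function.Injective r) :
    ∏ i ∈ univ.filter (fun i : Fin n => n - k ≤ (i : ℕ)), σ i ≤ ∏ j, σ (r j) := by
  have hkn : k ≤ n := by simpa using Fintype.card_le_of_injective r hr
  rw [← prod_image fun a _ b _ hab => hr hab]
  refine prod_le_prod_of_card_eq hσ₀ ?_ fun i hi j hj => hσ ?_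
  · have hsplit := card_filter_add_card_filter_not (s := (univ : Finset (Fin n)))
      fun i : Fin n => (i : ℕ) < n - k
    simp only [Fin.card_filter_val_lt, not_lt, card_univ, Fintype.card_fin] at hsplit
    rw [card_image_of_injective _ hr, card_univ, Fintype.card_fin]
    omega
  · simp only [mem_sdiff, mem_filter, mem_univ, true_and] at hi hj
    exact Fin.le_def.mpr (by omega)

end AntitoneProd

namespace Matrix

variable {R : Type*} [CommRing R] {ι κ : Type*} [Fintype κ] [DecidableEq κ]

theorem det_submatrix_mul_det_submatrix (B : Matrix κ ι R) (C : Matrix ι κ R) (r : κ → ι) :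
    (B.submatrix id r).det * (C.submatrix r id).det
      = ∑ τ : Equiv.Perm κ, (B.submatrix id (r ∘ τ)).det * ∏ j, C (r (τ j)) j := by
  rw [det_apply' (C.submatrix r id), mul_sum]
  refine sum_congr rfl fun τ _ => ?_
  rw [show B.submatrix id (r ∘ τ) = (B.submatrix id r).submatrix id τ from rfl, det_permute']
  simp only [submatrix_apply, id]
  ring

theorem det_submatrix_eq_zero_of_not_injective (M : Matrix ι κ R) {r : κ → ι}
    (hr : ¬ Function.Injective r) : (M.submatrix r id).det = 0 := by
  obtain ⟨a, b, hab, hne⟩ := Function.not_injective_iff.mp hr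
  exact det_zero_of_row_eq hne (by ext; simp [hab])

variable [Fintype ι]

theorem det_mul_eq_sum_det_submatrix_mul_prod (B : Matrix κ ι R) (C : Matrix ι κ R) :
    (B * C).det = ∑ r : κ → ι, (B.submatrix id r).det * ∏ j, C (r j) j := by
  simp only [det_apply', mul_apply, prod_univ_sum, mul_sum, Fintype.piFinset_univ, sum_mul,
    submatrix_apply, id, prod_mul_distrib, mul_assoc]
  exact sum_comm

/-- The Cauchy–Binet formula, with every `card κ`-subset of `ι` counted once per ordering. -/
theorem factorial_card_mul_det_mul (B : Matrix κ ι R) (C : Matrix ι κ R) :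
    ((Fintype.card κ).factorial : R) * (B * C).det
      = ∑ r : κ → ι, (B.submatrix id r).det * (C.submatrix r id).det := by
  simp_rw [det_submatrix_mul_det_submatrix]
  rw [sum_comm]
  have h (τ : Equiv.Perm κ) :
      ∑ r : κ → ι, (B.submatrix id (r ∘ τ)).det * ∏ j, C (r (τ j)) j = (B * C).det := by
    rw [det_mul_eq_sum_det_submatrix_mul_prod]
    exact Fintype.sum_equiv (τ.symm.arrowCongr (Equiv.refl ι)) _ _ fun r => rfl
  simp [h, Fintype.card_perm]

theorem factorial_card_mul_det_transpose_mul_self (W : Matrix ι κ R) :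
    ((Fintype.card κ).factorial : R) * (Wᵀ * W).det
      = ∑ r : κ → ι, (W.submatrix r id).det ^ 2 := by
  simp only [factorial_card_mul_det_mul, ← transpose_submatrix, det_transpose, sq]

variable [DecidableEq ι]

theorem factorial_card_mul_det_transpose_mul_diagonal_mul (W : Matrix ι κ R) (d : ι → R) :
    ((Fintype.card κ).factorial : R) * (Wᵀ * diagonal d * W).det
      = ∑ r : κ → ι, (∏ j, d (r j)) * (W.submatrix r id).det ^ 2 := by
  rw [factorial_card_mul_det_mul]
  refine sum_congr rfl fun r _ => ?_
  have h : (Wᵀ * diagonal d).submatrix id r = (W.submatrix r id)ᵀ * diagonal (d ∘ r) := by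
    ext; simp [mul_diagonal]
  rw [h, det_mul, det_transpose, det_diagonal]
  simp only [Function.comp_apply]
  ring

variable [LinearOrder R] [IsStrictOrderedRing R] {W : Matrix ι κ R} {d : ι → R} {a : R}

theorem le_det_transpose_mul_diagonal_mul
    (h : ∀ r : κ → ι, Function.Injective r → a ≤ ∏ j, d (r j)) :
    a * (Wᵀ * W).det ≤ (Wᵀ * diagonal d * W).det := by
  refine le_of_mul_le_mul_left ?_ (Nat.cast_pos.mpr (Nat.factorial_pos (Fintype.card κ)))
  rw [mul_left_comm, factorial_card_mul_det_transpose_mul_self,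
    factorial_card_mul_det_transpose_mul_diagonal_mul, mul_sum]
  refine sum_le_sum fun r _ => ?_
  by_cases hr : Function.Injective r
  · exact mul_le_mul_of_nonneg_right (h r hr) (sq_nonneg _)
  · simp [det_submatrix_eq_zero_of_not_injective W hr]

theorem det_transpose_mul_diagonal_mul_le
    (h : ∀ r : κ → ι, Function.Injective r → ∏ j, d (r j) ≤ a) :
    (Wᵀ * diagonal d * W).det ≤ a * (Wᵀ * W).det := by
  refine le_of_mul_le_mul_left ?_ (Nat.cast_pos.mpr (Nat.factorial_pos (Fintype.card κ)))
  rw [mul_left_comm _ a, factorial_card_mul_det_transpose_mul_self,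
    factorial_card_mul_det_transpose_mul_diagonal_mul, mul_sum]
  refine sum_le_sum fun r _ => ?_
  by_cases hr : Function.Injective r
  · exact mul_le_mul_of_nonneg_right (h r hr) (sq_nonneg _)
  · simp [det_submatrix_eq_zero_of_not_injective W hr]

end Matrix

theorem Matrix.IsHermitian.exists_mem_orthogonalGroup_eq_mul_diagonal_mul_transpose
    {ι : Type*} [Fintype ι] [DecidableEq ι] {M : Matrix ι ι ℝ} (hM : M.IsHermitian) {d : ι → ℝ}
    (hd : M.charpoly = ∏ i, (X - C (d i))) :
    ∃ U ∈ orthogonalGroup ι ℝ, M = U * diagonal d * Uᵀ := by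
  have hroots : univ.val.map d = univ.val.map hM.eigenvalues := by
    have := hM.roots_charpoly_eq_eigenvalues
    rw [hd, roots_prod _ _ (prod_ne_zero_iff.mpr fun i _ => X_sub_C_ne_zero _)] at this
    simpa using this
  obtain ⟨e, he⟩ := Function.exists_perm_eq_comp_of_map_univ_eq hroots
  have hM' := hM.spectral_theorem
  simp only [Unitary.conjStarAlgAut_apply, star_eq_conjTranspose,
    conjTranspose_eq_transpose_of_trivial, RCLike.ofReal_real_eq_id, Function.id_comp] at hM'
  have hU := (mem_orthogonalGroup_iff ι ℝ).mp hM.eigenvectorUnitary.2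
  generalize (hM.eigenvectorUnitary : Matrix ι ι ℝ) = U at hM' hU
  refine ⟨U.submatrix id e, (mem_orthogonalGroup_iff ι ℝ).mpr ?_, ?_⟩
  · rw [← hU]
    ext i j
    simp only [mul_apply, transpose_apply, submatrix_apply, id]
    exact Equiv.sum_comp e fun k => U i k * U j k
  · rw [hM', he]
    ext i j
    rw [mul_apply, mul_apply]
    simp only [mul_diagonal, transpose_apply, submatrix_apply, id, Function.comp_apply]
    exact (Equiv.sum_comp e fun k => U i k * hM.eigenvalues k * U j k).symm

open Matrix Polynomial in
theorem gram_det_bounds_of_singularValues_general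
    (n k : ℕ)
    (V : Matrix (Fin n) (Fin k) ℝ)
    (A : Matrix (Fin n) (Fin n) ℝ)
    (σ : Fin n → ℝ) (hσ_anti : Antitone σ) (hσ_nonneg : ∀ j, 0 ≤ σ j)
    (hσ : (Aᵀ * A).charpoly = ∏ j, (X - C (σ j ^ 2))) :
    (∏ i ∈ Finset.univ.filter (fun i : Fin n => n - k ≤ (i : ℕ)), σ i) ^ 2
        * (Vᵀ * V).det ≤ ((A * V)ᵀ * (A * V)).det ∧
      ((A * V)ᵀ * (A * V)).det ≤
        (∏ i ∈ Finset.univ.filter (fun i : Fin n => (i : ℕ) < k), σ i) ^ 2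
          * (Vᵀ * V).det := by
  have hAA_herm : (Aᵀ * A).IsHermitian := by
    simpa [conjTranspose_eq_transpose_of_trivial] using isHermitian_conjTranspose_mul_self A
  obtain ⟨U, hU, hAA_eq⟩ := hAA_herm.exists_mem_orthogonalGroup_eq_mul_diagonal_mul_transpose hσ
  have hgram_AV : (A * V)ᵀ * (A * V) = (Uᵀ * V)ᵀ * diagonal (fun j => σ j ^ 2) * (Uᵀ * V) := by
    rw [show (A * V)ᵀ * (A * V) = Vᵀ * (Aᵀ * A) * V by simp [transpose_mul, Matrix.mul_assoc],
      hAA_eq]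
    simp [transpose_mul, Matrix.mul_assoc]
  have hgram_V : Vᵀ * V = (Uᵀ * V)ᵀ * (Uᵀ * V) := by
    rw [transpose_mul, transpose_transpose, Matrix.mul_assoc, ← Matrix.mul_assoc U,
      (mem_orthogonalGroup_iff _ ℝ).mp hU, Matrix.one_mul]
  rw [hgram_AV, hgram_V]
  refine ⟨le_det_transpose_mul_diagonal_mul fun r hr => ?_,
    det_transpose_mul_diagonal_mul_le fun r hr => ?_⟩
  · rw [prod_pow]
    exact pow_le_pow_left₀ (prod_nonneg fun _ _ => hσ_nonneg _)
      (hσ_anti.prod_filter_le_prod_comp hσ_nonneg hr) 2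
  · rw [prod_pow]
    exact pow_le_pow_left₀ (prod_nonneg fun _ _ => hσ_nonneg _)
      (hσ_anti.prod_comp_le_prod_filter_lt hσ_nonneg hr) 2

open Matrix Polynomial in
/-- Gram determinant bounds under an invertible linear map:
`(∏_{i=n−k+1}^{n} σ_i)² · det(VᵀV) ≤ det((AV)ᵀ(AV)) ≤ (∏_{i=1}^{k} σ_i)² · det(VᵀV)`. -/
theorem gram_det_bounds_of_singularValues
    (n k : ℕ) (hk : k ≤ n)
    (V : Matrix (Fin n) (Fin k) ℝ)
    (A : Matrix (Fin n) (Fin n) ℝ) (hA : IsUnit A.det)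
    (σ : Fin n → ℝ) (hσ_anti : Antitone σ) (hσ_nonneg : ∀ j, 0 ≤ σ j)
    (hσ : (Aᵀ * A).charpoly = ∏ j, (X - C (σ j ^ 2))) :
    (∏ i ∈ Finset.univ.filter (fun i : Fin n => n - k ≤ (i : ℕ)), σ i) ^ 2
        * (Vᵀ * V).det ≤ ((A * V)ᵀ * (A * V)).det ∧
      ((A * V)ᵀ * (A * V)).det ≤
        (∏ i ∈ Finset.univ.filter (fun i : Fin n => (i : ℕ) < k), σ i) ^ 2
          * (Vᵀ * V).det :=
  gram_det_bounds_of_singularValues_general n k V A σ hσ_anti hσ_nonneg hσ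
end

section
/- Let X be a normed space, V an N-dimensional subspace, {T_i}_{i∈ℕ} ⊂ X' with ‖T_i‖ ≤ 1 a determining family for V, w ∈ ℓ¹ positive, and let P : X → V be the weighted least squares projector with orthonormal basis η₁,…,η_N of V for (x,y)_{T,w} = Σ_i w_i T_i(x) T_i(y). Then for every x ∈ X and every S ∈ X' with ‖S‖ ≤ 1: |S(Px)| ≤ ‖x‖ · Σ_{i=1}^∞ |Σ_{h=1}^N T_i(η_h) S(η_h)| · w_i. Consequently ‖P‖_op ≤ sup_{‖S‖≤1} Σ_i |Σ_h T_i(η_h) S(η_h)| w_i (the Lebesgue constant bounds the projector norm). -/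
/-!
Exchanging the finite sum over `h` with the series over `i` in the definition of `P` gives
`S (P x) = Σ_i w_i T_i(x) Σ_h T_i(η_h) S(η_h)`. Since `|T_i(x)| ≤ ‖x‖`, this is at most `‖x‖`
times the Lebesgue function at `S`; the norm bound then follows by choosing a norming
functional `S` for `P x` (Hahn–Banach).
-/

section WeightedProjector

variable {X ι κ : Type*} [NormedAddCommGroup X] [NormedSpace ℝ X] [Fintype κ]

noncomputable def weightedProjector (T : ι → X →L[ℝ] ℝ) (w : ι → ℝ) (η : κ → X) (x : X) : X :=
  ∑ h, (∑' i, w i * T i x * T i (η h)) • η h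

noncomputable def lebesgueFunction (T : ι → X →L[ℝ] ℝ) (w : ι → ℝ) (η : κ → X)
    (S : X →L[ℝ] ℝ) : ℝ :=
  ∑' i, |∑ h, T i (η h) * S (η h)| * w i

noncomputable def lebesgueConstant (T : ι → X →L[ℝ] ℝ) (w : ι → ℝ) (η : κ → X) : ℝ :=
  sSup {c : ℝ | ∃ S : X →L[ℝ] ℝ, ‖S‖ ≤ 1 ∧ c = lebesgueFunction T w η S}

lemma abs_apply_le_of_opNorm_le_one {S : X →L[ℝ] ℝ} (hS : ‖S‖ ≤ 1) (y : X) : |S y| ≤ ‖y‖ := by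
  simpa using S.le_of_opNorm_le hS y

lemma summable_mul_of_abs_le {a w : ι → ℝ} {C : ℝ} (ha : ∀ i, |a i| ≤ C)
    (hw : ∀ i, 0 ≤ w i) (hw_sum : Summable w) : Summable fun i => a i * w i :=
  Summable.of_norm_bounded (hw_sum.mul_left C) fun i => by
    rw [Real.norm_eq_abs, abs_mul, abs_of_nonneg (hw i)]
    exact mul_le_mul_of_nonneg_right (ha i) (hw i)

lemma summable_mul_apply_mul_apply {T : ι → X →L[ℝ] ℝ} (hT : ∀ i, ‖T i‖ ≤ 1) {w : ι → ℝ}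
    (hw : ∀ i, 0 ≤ w i) (hw_sum : Summable w) (x y : X) :
    Summable fun i => w i * T i x * T i y := by
  have hbound (i : ι) : |T i x * T i y| ≤ ‖x‖ * ‖y‖ := by
    rw [abs_mul]
    exact mul_le_mul (abs_apply_le_of_opNorm_le_one (hT i) x)
      (abs_apply_le_of_opNorm_le_one (hT i) y) (abs_nonneg _) (norm_nonneg _)
  simpa only [mul_comm, mul_left_comm] using summable_mul_of_abs_le hbound hw hw_sum

lemma abs_sum_apply_mul_apply_le {T : ι → X →L[ℝ] ℝ} (hT : ∀ i, ‖T i‖ ≤ 1) (η : κ → X)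
    {S : X →L[ℝ] ℝ} (hS : ‖S‖ ≤ 1) (i : ι) :
    |∑ h, T i (η h) * S (η h)| ≤ ∑ h, ‖η h‖ ^ 2 :=
  (Finset.abs_sum_le_sum_abs _ _).trans <| Finset.sum_le_sum fun h _ => by
    rw [abs_mul, sq]
    exact mul_le_mul (abs_apply_le_of_opNorm_le_one (hT i) _)
      (abs_apply_le_of_opNorm_le_one hS _) (abs_nonneg _) (norm_nonneg _)

lemma summable_lebesgueFunction {T : ι → X →L[ℝ] ℝ} (hT : ∀ i, ‖T i‖ ≤ 1) {w : ι → ℝ}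
    (hw : ∀ i, 0 ≤ w i) (hw_sum : Summable w) (η : κ → X) {S : X →L[ℝ] ℝ} (hS : ‖S‖ ≤ 1) :
    Summable fun i => |∑ h, T i (η h) * S (η h)| * w i :=
  summable_mul_of_abs_le (fun i => (abs_abs _).trans_le (abs_sum_apply_mul_apply_le hT η hS i))
    hw hw_sum

lemma lebesgueFunction_le {T : ι → X →L[ℝ] ℝ} (hT : ∀ i, ‖T i‖ ≤ 1) {w : ι → ℝ}
    (hw : ∀ i, 0 ≤ w i) (hw_sum : Summable w) (η : κ → X) {S : X →L[ℝ] ℝ} (hS : ‖S‖ ≤ 1) :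
    lebesgueFunction T w η S ≤ (∑ h, ‖η h‖ ^ 2) * ∑' i, w i :=
  calc lebesgueFunction T w η S ≤ ∑' i, (∑ h, ‖η h‖ ^ 2) * w i :=
        (summable_lebesgueFunction hT hw hw_sum η hS).tsum_le_tsum
          (fun i => mul_le_mul_of_nonneg_right (abs_sum_apply_mul_apply_le hT η hS i) (hw i))
          (hw_sum.mul_left _)
    _ = (∑ h, ‖η h‖ ^ 2) * ∑' i, w i := tsum_mul_left

lemma bddAbove_lebesgueFunction {T : ι → X →L[ℝ] ℝ} (hT : ∀ i, ‖T i‖ ≤ 1) {w : ι → ℝ}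
    (hw : ∀ i, 0 ≤ w i) (hw_sum : Summable w) (η : κ → X) :
    BddAbove {c : ℝ | ∃ S : X →L[ℝ] ℝ, ‖S‖ ≤ 1 ∧ c = lebesgueFunction T w η S} := by
  refine ⟨(∑ h, ‖η h‖ ^ 2) * ∑' i, w i, ?_⟩
  rintro c ⟨S, hS, rfl⟩
  exact lebesgueFunction_le hT hw hw_sum η hS

lemma apply_weightedProjector {T : ι → X →L[ℝ] ℝ} (hT : ∀ i, ‖T i‖ ≤ 1) {w : ι → ℝ}
    (hw : ∀ i, 0 ≤ w i) (hw_sum : Summable w) (η : κ → X) (S : X →L[ℝ] ℝ) (x : X) :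
    S (weightedProjector T w η x) = ∑' i, w i * T i x * ∑ h, T i (η h) * S (η h) := by
  have hsummable (h : κ) := summable_mul_apply_mul_apply hT hw hw_sum x (η h)
  simp only [weightedProjector, map_sum, map_smul, smul_eq_mul,
    ← (hsummable _).tsum_mul_right]
  rw [← Summable.tsum_finsetSum fun h _ => (hsummable h).mul_right _]
  simp only [Finset.mul_sum, mul_assoc]

theorem abs_apply_weightedProjector_le {T : ι → X →L[ℝ] ℝ} (hT : ∀ i, ‖T i‖ ≤ 1)
    {w : ι → ℝ} (hw : ∀ i, 0 ≤ w i) (hw_sum : Summable w) (η : κ → X) {S : X →L[ℝ] ℝ}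
    (hS : ‖S‖ ≤ 1) (x : X) :
    |S (weightedProjector T w η x)| ≤ ‖x‖ * lebesgueFunction T w η S := by
  rw [apply_weightedProjector hT hw hw_sum, lebesgueFunction, ← Real.norm_eq_abs]
  refine tsum_of_norm_bounded
    ((summable_lebesgueFunction hT hw hw_sum η hS).hasSum.mul_left ‖x‖) fun i => ?_
  rw [Real.norm_eq_abs, abs_mul, abs_mul, abs_of_nonneg (hw i)]
  calc w i * |T i x| * |∑ h, T i (η h) * S (η h)|
      ≤ w i * ‖x‖ * |∑ h, T i (η h) * S (η h)| := by
        gcongr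
        · exact hw i
        · exact abs_apply_le_of_opNorm_le_one (hT i) x
    _ = ‖x‖ * (|∑ h, T i (η h) * S (η h)| * w i) := by ring

theorem norm_weightedProjector_le {T : ι → X →L[ℝ] ℝ} (hT : ∀ i, ‖T i‖ ≤ 1) {w : ι → ℝ}
    (hw : ∀ i, 0 ≤ w i) (hw_sum : Summable w) (η : κ → X) (x : X) :
    ‖weightedProjector T w η x‖ ≤ ‖x‖ * lebesgueConstant T w η := by
  obtain ⟨S, hS, hSPx⟩ := exists_dual_vector'' ℝ (weightedProjector T w η x)
  calc ‖weightedProjector T w η x‖ = S (weightedProjector T w η x) := by simpa using hSPx.symm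
    _ ≤ |S (weightedProjector T w η x)| := le_abs_self _
    _ ≤ ‖x‖ * lebesgueFunction T w η S := abs_apply_weightedProjector_le hT hw hw_sum η hS x
    _ ≤ ‖x‖ * lebesgueConstant T w η := by
        gcongr
        exact le_csSup (bddAbove_lebesgueFunction hT hw hw_sum η) ⟨S, hS, rfl⟩

end WeightedProjector

theorem projector_norm_le_lebesgue_constant_general
    (X : Type*) [NormedAddCommGroup X] [NormedSpace ℝ X]
    (V : Subspace ℝ X) (N : ℕ)
    (T : ℕ → (X →L[ℝ] ℝ)) (hT : ∀ i, ‖T i‖ ≤ 1)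
    (w : ℕ → ℝ) (hw_pos : ∀ i, 0 < w i) (hw_sum : Summable w)
    (η : Fin N → V)
    (P : X → X)
    (hP : ∀ x, P x = ∑ h, (∑' i, w i * T i x * T i (η h : X)) • (η h : X)) :
    (∀ (x : X) (S : X →L[ℝ] ℝ), ‖S‖ ≤ 1 →
      |S (P x)| ≤ ‖x‖ * ∑' i, |∑ h, T i (η h : X) * S (η h : X)| * w i) ∧
      ∀ x : X, ‖P x‖ ≤ ‖x‖ * sSup {c : ℝ | ∃ S : X →L[ℝ] ℝ, ‖S‖ ≤ 1 ∧
        c = ∑' i, |∑ h, T i (η h : X) * S (η h : X)| * w i} := by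
  have hw (i : ℕ) : 0 ≤ w i := (hw_pos i).le
  obtain rfl : P = weightedProjector T w (fun h => (η h : X)) := funext hP
  exact ⟨fun x S hS => abs_apply_weightedProjector_le hT hw hw_sum _ hS x,
    norm_weightedProjector_le hT hw hw_sum _⟩

/-- The Lebesgue constant bounds the weighted least squares projector:
`|S(Px)| ≤ ‖x‖ · Σ_i |Σ_h T_i(η_h) S(η_h)| w_i` for every `‖S‖ ≤ 1`, and consequently
`‖P x‖ ≤ ‖x‖ ·` (Lebesgue constant). -/
theorem projector_norm_le_lebesgue_constant
    (X : Type*) [NormedAddCommGroup X] [NormedSpace ℝ X]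
    (V : Subspace ℝ X) (N : ℕ)
    (T : ℕ → (X →L[ℝ] ℝ)) (hT : ∀ i, ‖T i‖ ≤ 1)
    (hdet : ∀ v ∈ V, (∀ i, T i v = 0) → v = 0)
    (w : ℕ → ℝ) (hw_pos : ∀ i, 0 < w i) (hw_sum : Summable w)
    (η : Fin N → V)
    (hspan : Submodule.span ℝ (Set.range fun h => (η h : X)) = V)
    (hortho : ∀ h k, (∑' i, w i * T i (η h : X) * T i (η k : X)) =
      if h = k then 1 else 0)
    (P : X → X)
    (hP : ∀ x, P x = ∑ h, (∑' i, w i * T i x * T i (η h : X)) • (η h : X)) :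
    (∀ (x : X) (S : X →L[ℝ] ℝ), ‖S‖ ≤ 1 →
      |S (P x)| ≤ ‖x‖ * ∑' i, |∑ h, T i (η h : X) * S (η h : X)| * w i) ∧
      ∀ x : X, ‖P x‖ ≤ ‖x‖ * sSup {c : ℝ | ∃ S : X →L[ℝ] ℝ, ‖S‖ ≤ 1 ∧
        c = ∑' i, |∑ h, T i (η h : X) * S (η h : X)| * w i} :=
  projector_norm_le_lebesgue_constant_general X V N T hT w hw_pos hw_sum η P hP
end
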